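/- Let S be a symmetric positive definite d×d real matrix, m ∈ ℝ^d, and let μ = e^{-f}·Leb be a probability measure on ℝ^d with f ∈ C¹(ℝ^d) and ∫‖∇f‖² dμ < ∞. For t ∈ [0,1] set A_t := (1−t)·Id + t·S and T_t(x) := (1−t)x + t(Sx + m), and let ρ_t := (T_t)_#μ. Then: (i) ρ_t has Lebesgue density r_t(y) = det(A_t)⁻¹ exp(−f(A_t⁻¹(y − tm))), and its Fisher information satisfies ∫‖∇ log r_t‖² dρ_t = ∫‖A_t⁻¹ ∇f(x)‖² dμ(x); (ii) the integrated Fisher information along the interpolation equals the S-weighted Fisher information of μ: ∫₀¹ ∫ ‖A_t⁻¹ ∇f(x)‖² dμ(x) dt = ∫ ∇f(x)·S⁻¹∇f(x) dμ(x). -/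

import Mathlib

/-!
Write `A t = (1 - t) • 1 + t • S`, so that the interpolating map is `x ↦ A t x + t • m`.
Along `[0, 1]` every `A t` is invertible and symmetric, and `det (A t) > 0` since it does not
vanish and equals `1` at `t = 0`. Part (i) is then the linear change of variables together with
the chain rule `∇ log r_t (A t x + t • m) = -(A t)⁻¹ ∇f x`. For part (ii), differentiating the
inverse and using symmetry gives `d/dt (t ⟪(A t)⁻¹ v, v⟫) = ‖(A t)⁻¹ v‖²`, hence
`∫₀¹ ‖(A t)⁻¹ v‖² dt = ⟪v, S⁻¹ v⟫`; integrate this against `μ` after exchanging the integrals,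
which is legitimate because `‖(A t)⁻¹‖` is bounded on `[0, 1]`.
-/

open MeasureTheory Set AffineMap
open scoped RealInnerProductSpace ENNReal

abbrev Euc (d : ℕ) := EuclideanSpace ℝ (Fin d)

theorem MeasurableEquiv.map_withDensity {α β : Type*} [MeasurableSpace α] [MeasurableSpace β]
    (e : α ≃ᵐ β) (ν : Measure α) (g : α → ℝ≥0∞) :
    (ν.withDensity g).map e = (ν.map e).withDensity (g ∘ e.symm) := by
  ext s hs
  rw [e.map_apply, withDensity_apply _ (e.measurable hs), withDensity_apply _ hs, e.restrict_map,
    lintegral_map_equiv]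
  simp

section AffineChangeOfVariables

variable {E : Type*} [NormedAddCommGroup E] [NormedSpace ℝ E] [MeasurableSpace E] [BorelSpace E]
  [FiniteDimensional ℝ E] (ν : Measure E) [ν.IsAddHaarMeasure]

theorem map_affine_addHaar (L : E ≃L[ℝ] E) (a : E) :
    ν.map (fun x => L x + a) = ENNReal.ofReal |(L : E →L[ℝ] E).det⁻¹| • ν := by
  have hL : ν.map L = ENNReal.ofReal |(L : E →L[ℝ] E).det⁻¹| • ν :=
    Measure.map_linearMap_addHaar_eq_smul_addHaar ν L.toLinearEquiv.isUnit_det'.ne_zero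
  rw [show (fun x => L x + a) = (· + a) ∘ L from rfl,
    ← Measure.map_map (measurable_add_const a) L.continuous.measurable, hL, Measure.map_smul,
    map_add_right_eq_self]

theorem map_affine_withDensity_addHaar (L : E ≃L[ℝ] E) (a : E) (g : E → ℝ≥0∞) :
    (ν.withDensity g).map (fun x => L x + a) =
      ν.withDensity fun y => ENNReal.ofReal |(L : E →L[ℝ] E).det⁻¹| * g (L.symm (y - a)) := by
  let e : E ≃ᵐ E := (L.toHomeomorph.trans (Homeomorph.addRight a)).toMeasurableEquiv
  have he_symm : ∀ y, e.symm y = L.symm (y - a) := fun y => by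
    simp [e, sub_eq_add_neg, Homeomorph.addRight]
  rw [show (fun x => L x + a) = e from rfl, e.map_withDensity,
    show (e : E → E) = fun x => L x + a from rfl, map_affine_addHaar, withDensity_smul_measure,
    ← withDensity_smul' _ _ ENNReal.ofReal_ne_top]
  simp only [Function.comp_def, he_symm]
  rfl

theorem map_affine_withDensity_ofReal_addHaar {L : E ≃L[ℝ] E} (hL : 0 < (L : E →L[ℝ] E).det)
    (a : E) (ρ : E → ℝ) :
    (ν.withDensity fun x => ENNReal.ofReal (ρ x)).map (fun x => L x + a) =
      ν.withDensity fun y => ENNReal.ofReal ((L : E →L[ℝ] E).det⁻¹ * ρ (L.symm (y - a))) := by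
  simp_rw [map_affine_withDensity_addHaar, abs_of_pos (inv_pos.2 hL),
    ENNReal.ofReal_mul (inv_pos.2 hL).le]

end AffineChangeOfVariables

section Symmetric

variable {E : Type*} [NormedAddCommGroup E] [InnerProductSpace ℝ E]

theorem LinearMap.IsSymmetric.continuousLinearEquiv_symm {L : E ≃L[ℝ] E}
    (hL : ((L : E →L[ℝ] E) : E →ₗ[ℝ] E).IsSymmetric) :
    ((L.symm : E →L[ℝ] E) : E →ₗ[ℝ] E).IsSymmetric := fun u v =>
  calc ⟪L.symm u, v⟫ = ⟪L.symm u, L (L.symm v)⟫ := by rw [L.apply_symm_apply]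
    _ = ⟪L (L.symm u), L.symm v⟫ := (hL _ _).symm
    _ = ⟪u, L.symm v⟫ := by rw [L.apply_symm_apply]

theorem LinearMap.IsSymmetric.ringInverse {A : E →L[ℝ] E} (hA : (A : E →ₗ[ℝ] E).IsSymmetric) :
    ((Ring.inverse A : E →L[ℝ] E) : E →ₗ[ℝ] E).IsSymmetric := by
  by_cases hunit : IsUnit A
  · obtain ⟨u, rfl⟩ := hunit
    rw [Ring.inverse_unit]
    exact LinearMap.IsSymmetric.continuousLinearEquiv_symm (L := .ofUnit u) hA
  · rw [Ring.inverse_non_unit _ hunit]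
    exact fun u v => by simp

theorem LinearMap.IsSymmetric.lineMap_one {S : E →L[ℝ] E} (hS : (S : E →ₗ[ℝ] E).IsSymmetric)
    (t : ℝ) : ((lineMap 1 S t : E →L[ℝ] E) : E →ₗ[ℝ] E).IsSymmetric := fun u v => by
  simp [lineMap_apply_module, inner_add_left, inner_add_right, inner_smul_left, inner_smul_right]
  exact Or.inl (hS u v)

end Symmetric

section Gradient

variable {E : Type*} [NormedAddCommGroup E] [InnerProductSpace ℝ E] [CompleteSpace E]

theorem ContDiff.continuous_gradient {f : E → ℝ} (hf : ContDiff ℝ 1 f) :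
    Continuous (gradient f) :=
  (InnerProductSpace.toDual ℝ E).symm.continuous.comp (hf.continuous_fderiv one_ne_zero)

theorem HasGradientAt.comp_symmetric_affine {f : E → ℝ} {f' : E} {B : E →L[ℝ] E}
    (hB : (B : E →ₗ[ℝ] E).IsSymmetric) {a y : E} (hf : HasGradientAt f f' (B (y - a))) :
    HasGradientAt (fun y => f (B (y - a))) (B f') y := by
  have hB' : HasFDerivAt (fun y => B (y - a)) B y := by
    have := B.hasFDerivAt.comp y ((hasFDerivAt_id y).sub_const a)
    rwa [B.comp_id] at this
  have hdual :
      InnerProductSpace.toDual ℝ E (B f') = (InnerProductSpace.toDual ℝ E f').comp B := by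
    ext w
    simpa using hB f' w
  rw [hasGradientAt_iff_hasFDerivAt, hdual]
  exact hf.hasFDerivAt.comp y hB'

theorem gradient_log_mul_exp_neg {c : ℝ} (hc : 0 < c) (h : E → ℝ) (y : E) :
    gradient (fun y => Real.log (c * Real.exp (-h y))) y = -gradient h y := by
  have hlog : (fun y => Real.log (c * Real.exp (-h y))) = fun y => Real.log c - h y := by
    funext y
    rw [Real.log_mul hc.ne' (Real.exp_ne_zero _), Real.log_exp, sub_eq_add_neg]
  simp only [hlog, gradient, fderiv_const_sub, map_neg]

theorem integral_norm_gradient_log_affine_density_sq [MeasurableSpace E] [BorelSpace E]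
    (μ : Measure E) {L : E ≃L[ℝ] E} (hL : ((L : E →L[ℝ] E) : E →ₗ[ℝ] E).IsSymmetric) (a : E)
    {c : ℝ} (hc : 0 < c) {f : E → ℝ} (hf : Differentiable ℝ f) :
    ∫ y, ‖gradient (fun y' => Real.log (c * Real.exp (-f (L.symm (y' - a))))) y‖ ^ 2
        ∂(μ.map fun x => L x + a) =
      ∫ x, ‖L.symm (gradient f x)‖ ^ 2 ∂μ := by
  have hemb : MeasurableEmbedding fun x => L x + a :=
    (L.toHomeomorph.trans (Homeomorph.addRight a)).measurableEmbedding
  rw [hemb.integral_map]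
  refine integral_congr_ae (Filter.Eventually.of_forall fun x => ?_)
  have hgrad := ((hf _).hasGradientAt.comp_symmetric_affine (a := a) (y := L x + a)
    hL.continuousLinearEquiv_symm).gradient
  simp only [add_sub_cancel_right, ContinuousLinearEquiv.coe_coe, L.symm_apply_apply] at hgrad
  simp only [gradient_log_mul_exp_neg hc, hgrad, norm_neg]

end Gradient

theorem ContinuousOn.ringInverse {R X : Type*} [NormedRing R] [HasSummableGeomSeries R]
    [TopologicalSpace X] {g : X → R} {s : Set X} (hg : ContinuousOn g s)
    (hunit : ∀ x ∈ s, IsUnit (g x)) : ContinuousOn (fun x => Ring.inverse (g x)) s := by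
  intro x hx
  obtain ⟨u, hu⟩ := hunit x hx
  exact (hu ▸ NormedRing.inverse_continuousAt u).comp_continuousWithinAt (hg x hx)

theorem IsPreconnected.pos_of_forall_ne_zero {X : Type*} [TopologicalSpace X] {s : Set X}
    (hs : IsPreconnected s) {g : X → ℝ} (hg : ContinuousOn g s) (hne : ∀ x ∈ s, g x ≠ 0)
    {x₀ : X} (hx₀ : x₀ ∈ s) (h₀ : 0 < g x₀) {x : X} (hx : x ∈ s) : 0 < g x := by
  by_contra! h
  obtain ⟨y, hy, hy0⟩ := hs.intermediate_value hx hx₀ hg ⟨h, h₀.le⟩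
  exact hne y hy hy0

theorem ContinuousLinearMap.det_lineMap_one_pos {E : Type*} [NormedAddCommGroup E]
    [NormedSpace ℝ E] {S : E →L[ℝ] E}
    (hunit : ∀ t ∈ Icc (0 : ℝ) 1, IsUnit (lineMap 1 S t : E →L[ℝ] E)) {t : ℝ}
    (ht : t ∈ Icc (0 : ℝ) 1) : 0 < (lineMap 1 S t : E →L[ℝ] E).det := by
  refine isPreconnected_Icc.pos_of_forall_ne_zero
    (ContinuousLinearMap.continuous_det.comp lineMap_continuous).continuousOn
    (fun s hs => ?_) (left_mem_Icc.2 zero_le_one) (by simp [ContinuousLinearMap.det]) ht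
  obtain ⟨u, hu⟩ := hunit s hs
  rw [Function.comp_apply, ← hu]
  exact (ContinuousLinearEquiv.ofUnit u).toLinearEquiv.isUnit_det'.ne_zero

theorem intervalIntegral_integral_norm_apply_sq_swap {α E F : Type*} [MeasurableSpace α]
    [NormedAddCommGroup E] [NormedSpace ℝ E] [NormedAddCommGroup F] [NormedSpace ℝ F]
    {μ : Measure α} [SFinite μ] {B : ℝ → E →L[ℝ] F} {a b : ℝ} (hab : a ≤ b)
    (hB : ContinuousOn B (Icc a b)) {g : α → E} (hg : AEStronglyMeasurable g μ)
    (hg2 : Integrable (fun x => ‖g x‖ ^ 2) μ) :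
    ∫ t in a..b, ∫ x, ‖B t (g x)‖ ^ 2 ∂μ = ∫ x, (∫ t in a..b, ‖B t (g x)‖ ^ 2) ∂μ := by
  simp only [intervalIntegral.integral_of_le hab]
  obtain ⟨C, hC⟩ := isCompact_Icc.exists_bound_of_continuousOn hB
  have hBmeas : AEStronglyMeasurable B (volume.restrict (Ioc a b)) :=
    (hB.mono Ioc_subset_Icc_self).aestronglyMeasurable measurableSet_Ioc
  refine integral_integral_swap (Integrable.mono' ((hg2.const_mul (C ^ 2)).comp_snd _) ?_ ?_)
  · exact (by fun_prop : Continuous fun p : (E →L[ℝ] F) × E => ‖p.1 p.2‖ ^ 2)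
      |>.comp_aestronglyMeasurable (hBmeas.comp_fst.prodMk hg.comp_snd)
  · filter_upwards [Measure.quasiMeasurePreserving_fst.ae (ae_restrict_mem measurableSet_Ioc)]
      with p hp
    rw [Function.uncurry_apply_pair, norm_pow, norm_norm, ← mul_pow]
    exact pow_le_pow_left₀ (norm_nonneg _)
      ((B p.1).le_of_opNorm_le (hC p.1 (Ioc_subset_Icc_self hp)) (g p.2)) 2

section InverseAlongSegment

variable {E : Type*} [NormedAddCommGroup E] [InnerProductSpace ℝ E] [CompleteSpace E]
  {S : E →L[ℝ] E}

theorem hasDerivAt_mul_inner_ringInverse_lineMap (hS : (S : E →ₗ[ℝ] E).IsSymmetric) {t : ℝ}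
    (ht : IsUnit (lineMap 1 S t : E →L[ℝ] E)) (v : E) :
    HasDerivAt (fun s => s * ⟪Ring.inverse (lineMap 1 S s : E →L[ℝ] E) v, v⟫)
      (‖Ring.inverse (lineMap 1 S t : E →L[ℝ] E) v‖ ^ 2) t := by
  obtain ⟨u, hu⟩ := ht
  have hR := ((hu ▸ hasFDerivAt_ringInverse (𝕜 := ℝ) u).comp_hasDerivAt t
    hasDerivAt_lineMap).clm_apply (hasDerivAt_const t v)
  refine ((hasDerivAt_id t).mul (hR.inner ℝ (hasDerivAt_const t v))).congr_deriv ?_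
  simp only [Function.comp_apply, neg_apply, ContinuousLinearMap.mulLeftRight_apply, map_zero,
    inner_zero_right, zero_add, add_zero, id_eq, inner_neg_left, ← hu, Ring.inverse_unit]
  set w := (↑u⁻¹ : E →L[ℝ] E) v
  have hsymm : ∀ z, ⟪(↑u⁻¹ : E →L[ℝ] E) z, v⟫ = ⟪z, w⟫ := by
    have := (hS.lineMap_one t).ringInverse
    rw [← hu, Ring.inverse_unit] at this
    exact fun z => this z v
  have hv : ⟪w, v⟫ = (1 - t) * ⟪w, w⟫ + t * ⟪w, S w⟫ := by
    have : (↑u : E →L[ℝ] E) w = v := by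
      change ((↑u * ↑u⁻¹ : E →L[ℝ] E)) v = v
      rw [Units.mul_inv]
      rfl
    rw [← this, hu]
    simp [lineMap_apply_module, inner_add_right, inner_smul_right]
  change _ + t * -⟪(↑u⁻¹ : E →L[ℝ] E) ((S - 1) w), v⟫ = _
  rw [hsymm, hsymm, sub_apply, one_apply_eq_self, inner_sub_left, real_inner_comm w v, hv,
    real_inner_comm w (S w), real_inner_self_eq_norm_sq]
  ring

theorem integral_norm_ringInverse_lineMap_sq (hS : (S : E →ₗ[ℝ] E).IsSymmetric)
    (hunit : ∀ t ∈ Icc (0 : ℝ) 1, IsUnit (lineMap 1 S t : E →L[ℝ] E)) (v : E) :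
    ∫ t in (0 : ℝ)..1, ‖Ring.inverse (lineMap 1 S t : E →L[ℝ] E) v‖ ^ 2 =
      ⟪v, Ring.inverse S v⟫ := by
  have hcont : ContinuousOn (fun t : ℝ => Ring.inverse (lineMap 1 S t : E →L[ℝ] E)) (Icc 0 1) :=
    (lineMap_continuous (R := ℝ)).continuousOn.ringInverse hunit
  have h01 : uIcc (0 : ℝ) 1 = Icc 0 1 := uIcc_of_le zero_le_one
  rw [intervalIntegral.integral_eq_sub_of_hasDerivAt
    (fun t ht => hasDerivAt_mul_inner_ringInverse_lineMap hS (hunit t (h01 ▸ ht)) v)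
    (ContinuousOn.intervalIntegrable (h01 ▸ (hcont.clm_apply continuousOn_const).norm.pow 2))]
  simp [real_inner_comm]

theorem intervalIntegral_integral_norm_ringInverse_lineMap_sq (hS : (S : E →ₗ[ℝ] E).IsSymmetric)
    (hunit : ∀ t ∈ Icc (0 : ℝ) 1, IsUnit (lineMap 1 S t : E →L[ℝ] E)) {α : Type*}
    [MeasurableSpace α] {μ : Measure α} [SFinite μ] {g : α → E} (hg : AEStronglyMeasurable g μ)
    (hg2 : Integrable (fun x => ‖g x‖ ^ 2) μ) :
    ∫ t in (0 : ℝ)..1, ∫ x, ‖Ring.inverse (lineMap 1 S t : E →L[ℝ] E) (g x)‖ ^ 2 ∂μ =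
      ∫ x, ⟪g x, Ring.inverse S (g x)⟫ ∂μ := by
  rw [intervalIntegral_integral_norm_apply_sq_swap zero_le_one
    ((lineMap_continuous (R := ℝ)).continuousOn.ringInverse hunit) hg hg2]
  simp only [integral_norm_ringInverse_lineMap_sq hS hunit]

end InverseAlongSegment

theorem stmt14_general (d : ℕ)
    (S : Euc d →L[ℝ] Euc d)
    (hSsymm : ∀ u v, ⟪S u, v⟫ = ⟪u, S v⟫)
    (Sinv : Euc d →L[ℝ] Euc d)
    (hSinv₁ : ∀ v, Sinv (S v) = v)
    (m : Euc d)
    (f : Euc d → ℝ) (hf : ContDiff ℝ 1 f)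
    (μ : Measure (Euc d))
    (hμ : μ = volume.withDensity fun x => ENNReal.ofReal (Real.exp (-f x)))
    [IsProbabilityMeasure μ]
    (hFish : Integrable (fun x => ‖gradient f x‖ ^ 2) μ)
    (Ainv : ℝ → (Euc d →L[ℝ] Euc d))
    (hAinv : ∀ t ∈ Set.Icc (0:ℝ) 1,
      (∀ v, Ainv t ((1 - t) • v + t • S v) = v) ∧
      (∀ v, (1 - t) • (Ainv t v) + t • S (Ainv t v) = v)) :
    (∀ t ∈ Set.Icc (0:ℝ) 1,
      Measure.map (fun x => (1 - t) • x + t • (S x + m)) μ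
        = volume.withDensity (fun y => ENNReal.ofReal
            ((LinearMap.det
                (((1 - t) • ContinuousLinearMap.id ℝ (Euc d) + t • S :
                  Euc d →L[ℝ] Euc d) : Euc d →ₗ[ℝ] Euc d))⁻¹
              * Real.exp (-f (Ainv t (y - t • m))))) ∧
      (∫ y, ‖gradient (fun y' => Real.log
            ((LinearMap.det
                (((1 - t) • ContinuousLinearMap.id ℝ (Euc d) + t • S :
                  Euc d →L[ℝ] Euc d) : Euc d →ₗ[ℝ] Euc d))⁻¹
              * Real.exp (-f (Ainv t (y' - t • m))))) y‖ ^ 2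
          ∂(Measure.map (fun x => (1 - t) • x + t • (S x + m)) μ))
        = ∫ x, ‖Ainv t (gradient f x)‖ ^ 2 ∂μ) ∧
    (∫ t in (0:ℝ)..1, ∫ x, ‖Ainv t (gradient f x)‖ ^ 2 ∂μ)
      = ∫ x, ⟪gradient f x, Sinv (gradient f x)⟫ ∂μ := by
  set A : ℝ → Euc d →L[ℝ] Euc d := fun t => lineMap 1 S t
  have hA : ∀ t, A t = (1 - t) • ContinuousLinearMap.id ℝ (Euc d) + t • S := fun t =>
    lineMap_apply_module _ _ _
  let L : ∀ t ∈ Icc (0 : ℝ) 1, Euc d ≃L[ℝ] Euc d := fun t ht =>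
    .equivOfInverse (A t) (Ainv t) (fun v => by simpa [hA] using (hAinv t ht).1 v)
      (fun v => by simpa [hA] using (hAinv t ht).2 v)
  have hunit : ∀ t ∈ Icc (0 : ℝ) 1, IsUnit (A t) := fun t ht => ⟨(L t ht).toUnit, rfl⟩
  have hinv : ∀ t ∈ Icc (0 : ℝ) 1, Ring.inverse (A t) = Ainv t := fun t ht =>
    Ring.inverse_unit (L t ht).toUnit
  have hSinv : Ring.inverse S = Sinv := by
    have hSunit : IsUnit S := by simpa [A] using hunit 1 (right_mem_Icc.2 zero_le_one)
    simpa [show Sinv * S = 1 from ContinuousLinearMap.ext hSinv₁] using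
      Ring.mul_inverse_cancel_right S Sinv hSunit
  refine ⟨fun t ht => ?_, ?_⟩
  · have hdet : 0 < (L t ht : Euc d →L[ℝ] Euc d).det :=
      ContinuousLinearMap.det_lineMap_one_pos hunit ht
    have hT : (fun x => (1 - t) • x + t • (S x + m)) = fun x => L t ht x + t • m := by
      funext x
      simp [L, hA, smul_add, add_assoc]
    rw [← hA, hT]
    exact ⟨hμ ▸ map_affine_withDensity_ofReal_addHaar volume hdet (t • m) _,
      integral_norm_gradient_log_affine_density_sq μ (L := L t ht)
        (LinearMap.IsSymmetric.lineMap_one (S := S) hSsymm t) (t • m) (inv_pos.2 hdet)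
        (hf.differentiable one_ne_zero)⟩
  · calc ∫ t in (0 : ℝ)..1, ∫ x, ‖Ainv t (gradient f x)‖ ^ 2 ∂μ
        = ∫ t in (0 : ℝ)..1, ∫ x, ‖Ring.inverse (A t) (gradient f x)‖ ^ 2 ∂μ :=
          intervalIntegral.integral_congr fun t ht => by
            simp only [hinv t (uIcc_of_le (zero_le_one' ℝ) ▸ ht)]
      _ = ∫ x, ⟪gradient f x, Sinv (gradient f x)⟫ ∂μ := by
          rw [intervalIntegral_integral_norm_ringInverse_lineMap_sq hSsymm hunit
            hf.continuous_gradient.aestronglyMeasurable hFish, hSinv]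

/-- Along the McCann interpolation for an affine Brenier map `x ↦ Sx + m`:
(i) the interpolant `ρ_t` has density `det(A_t)⁻¹·exp(−f(A_t⁻¹(y − tm)))` and Fisher
information `∫‖A_t⁻¹∇f‖² dμ`; (ii) the integrated Fisher information equals the
`S`-weighted Fisher information `∫ ∇f·S⁻¹∇f dμ`. -/
theorem stmt14 (d : ℕ)
    (S : Euc d →L[ℝ] Euc d)
    (hSsymm : ∀ u v, ⟪S u, v⟫ = ⟪u, S v⟫)
    (hSpos : ∀ v, v ≠ 0 → 0 < ⟪S v, v⟫)
    (Sinv : Euc d →L[ℝ] Euc d)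
    (hSinv₁ : ∀ v, Sinv (S v) = v) (hSinv₂ : ∀ v, S (Sinv v) = v)
    (m : Euc d)
    (f : Euc d → ℝ) (hf : ContDiff ℝ 1 f)
    (μ : Measure (Euc d))
    (hμ : μ = volume.withDensity fun x => ENNReal.ofReal (Real.exp (-f x)))
    [IsProbabilityMeasure μ]
    (hFish : Integrable (fun x => ‖gradient f x‖ ^ 2) μ)
    (Ainv : ℝ → (Euc d →L[ℝ] Euc d))
    (hAinv : ∀ t ∈ Set.Icc (0:ℝ) 1,
      (∀ v, Ainv t ((1 - t) • v + t • S v) = v) ∧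
      (∀ v, (1 - t) • (Ainv t v) + t • S (Ainv t v) = v)) :
    (∀ t ∈ Set.Icc (0:ℝ) 1,
      Measure.map (fun x => (1 - t) • x + t • (S x + m)) μ
        = volume.withDensity (fun y => ENNReal.ofReal
            ((LinearMap.det
                (((1 - t) • ContinuousLinearMap.id ℝ (Euc d) + t • S :
                  Euc d →L[ℝ] Euc d) : Euc d →ₗ[ℝ] Euc d))⁻¹
              * Real.exp (-f (Ainv t (y - t • m))))) ∧
      (∫ y, ‖gradient (fun y' => Real.log
            ((LinearMap.det
                (((1 - t) • ContinuousLinearMap.id ℝ (Euc d) + t • S :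
                  Euc d →L[ℝ] Euc d) : Euc d →ₗ[ℝ] Euc d))⁻¹
              * Real.exp (-f (Ainv t (y' - t • m))))) y‖ ^ 2
          ∂(Measure.map (fun x => (1 - t) • x + t • (S x + m)) μ))
        = ∫ x, ‖Ainv t (gradient f x)‖ ^ 2 ∂μ) ∧
    (∫ t in (0:ℝ)..1, ∫ x, ‖Ainv t (gradient f x)‖ ^ 2 ∂μ)
      = ∫ x, ⟪gradient f x, Sinv (gradient f x)⟫ ∂μ :=
  stmt14_general d S hSsymm Sinv hSinv₁ m f hf μ hμ hFish Ainv hAinv
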